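/- arXiv:0809.4509 — 6 statements merged into one kernel-verified Lean document; each statement's English description precedes it below -/
import Mathlib

section
/- Let Λ be a set and let I be a proper ideal of the ring of all functions Λ → ℝ with pointwise operations. Then the family of zero sets 𝓕_I = { Z(x) | x ∈ I } is a filter on Λ with ∅ ∉ 𝓕_I, and moreover I = { x : Λ → ℝ | Z(x) ∈ 𝓕_I }; that is, every proper ideal of Λ → ℝ arises from a proper filter on Λ via zero sets. -/
/-! Everything rests on one observation: if `y ∈ I` and `Z(y) ⊆ Z(x)`, then `x = (x * y⁻¹) * y`
pointwise (with `0⁻¹ = 0`), so `x ∈ I`. Hence membership in `I` depends only on the zero set, the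
zero sets of `I` are closed under supersets (realised by indicator functions) and under
intersections (realised by `x + 1_{Z(x)} * y`), and `∅ = Z(1)` is a zero set only if `1 ∈ I`. -/

variable {Λ K : Type*} [DivisionRing K]

def zeroSet (x : Λ → K) : Set Λ := {l | x l = 0}

@[simp]
theorem mem_zeroSet {x : Λ → K} {l : Λ} : l ∈ zeroSet x ↔ x l = 0 := Iff.rfl

@[simp]
theorem zeroSet_zero : zeroSet (0 : Λ → K) = Set.univ := by
  ext; simp

@[simp]
theorem zeroSet_one : zeroSet (1 : Λ → K) = ∅ := by
  ext; simp

@[simp]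
theorem zeroSet_indicator_compl_one (B : Set Λ) : zeroSet (Bᶜ.indicator (1 : Λ → K)) = B := by
  ext l; by_cases hl : l ∈ B <;> simp [hl]

theorem zeroSet_add_indicator_mul (x y : Λ → K) :
    zeroSet (x + (zeroSet x).indicator 1 * y) = zeroSet x ∩ zeroSet y := by
  ext l; by_cases hl : x l = 0 <;> simp [hl]

namespace Ideal

variable {I : Ideal (Λ → K)}

theorem mem_of_zeroSet_subset {x y : Λ → K} (hy : y ∈ I) (h : zeroSet y ⊆ zeroSet x) : x ∈ I := by
  have hx : x = (x * y⁻¹) * y := funext fun l => by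
    by_cases hl : y l = 0
    · have hxl : x l = 0 := h hl
      simp [hl, hxl]
    · simp [inv_mul_cancel_right₀ hl]
  rw [hx]
  exact I.mul_mem_left _ hy

variable (I) in
def zeroSetFilter : Filter Λ where
  sets := zeroSet '' (I : Set (Λ → K))
  univ_sets := ⟨0, I.zero_mem, zeroSet_zero⟩
  sets_of_superset := by
    rintro _ B ⟨y, hy, rfl⟩ hB
    refine ⟨Bᶜ.indicator 1, mem_of_zeroSet_subset hy ?_, zeroSet_indicator_compl_one B⟩
    rwa [zeroSet_indicator_compl_one]
  inter_sets := by
    rintro _ _ ⟨x, hx, rfl⟩ ⟨y, hy, rfl⟩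
    exact ⟨_, I.add_mem hx (I.mul_mem_left _ hy), zeroSet_add_indicator_mul x y⟩

theorem zeroSetFilter_sets : I.zeroSetFilter.sets = zeroSet '' (I : Set (Λ → K)) := rfl

theorem zeroSet_mem_zeroSetFilter_iff {x : Λ → K} : zeroSet x ∈ I.zeroSetFilter ↔ x ∈ I := by
  constructor
  · rintro ⟨y, hy, hyx⟩
    exact mem_of_zeroSet_subset hy hyx.subset
  · exact fun hx => ⟨x, hx, rfl⟩

theorem empty_mem_zeroSetFilter_iff : ∅ ∈ I.zeroSetFilter ↔ (1 : Λ → K) ∈ I := by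
  rw [← zeroSet_one (Λ := Λ) (K := K), zeroSet_mem_zeroSetFilter_iff]

end Ideal

/-- For a proper ideal `I` of the ring of all functions `Λ → ℝ`
(pointwise operations), the family of zero sets `𝓕_I = { Z(x) | x ∈ I }` is a
proper filter on `Λ` (i.e. a filter with `∅ ∉ 𝓕_I`), and `I = { x | Z(x) ∈ 𝓕_I }`:
every proper ideal of `Λ → ℝ` arises from a proper filter via zero sets. -/
theorem proper_ideal_gives_filter (Λ : Type) (I : Ideal (Λ → ℝ))
    (hproper : (1 : Λ → ℝ) ∉ I) :
    ∃ 𝓕 : Filter Λ, (∅ : Set Λ) ∉ 𝓕 ∧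
      𝓕.sets = (fun x : Λ → ℝ => {l : Λ | x l = 0}) '' (I : Set (Λ → ℝ)) ∧
      (I : Set (Λ → ℝ)) = {x : Λ → ℝ | {l : Λ | x l = 0} ∈ 𝓕} :=
  ⟨I.zeroSetFilter, Ideal.empty_mem_zeroSetFilter_iff.not.mpr hproper, Ideal.zeroSetFilter_sets,
    Set.ext fun _ => Ideal.zeroSet_mem_zeroSetFilter_iff.symm⟩
end

section
/- Let 𝓤 be an ultrafilter on ℕ containing the cofinite filter, let 𝔽 = Filter.Germ ↑𝓤 ℝ, and let t, u, s ∈ 𝔽 with u > 0. If s ∈ WW(t,u), then WW(s,u) = WW(t,u); walkable worlds with a common step length and a common point coincide. -/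
/-- The walkable world around `t` with step length `u` in the ultrapower field
`𝔽 = Filter.Germ ↑𝓤 ℝ`: the set `WW(t,u) = ⋃ n, (t - n•u, t + n•u)` of elements
reachable from `t` by finitely many steps of length `u`. -/
def WW (𝓤 : Ultrafilter ℕ) (t u : Filter.Germ (𝓤 : Filter ℕ) ℝ) :
    Set (Filter.Germ (𝓤 : Filter ℕ) ℝ) :=
  ⋃ n : ℕ, Set.Ioo (t - n • u) (t + n • u)

open Set

section WalkableWorld

variable {α : Type*} [AddCommGroup α] [LinearOrder α] [IsOrderedAddMonoid α] {t u s : α}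

theorem mem_iUnion_Ioo_nsmul_iff :
    s ∈ ⋃ n : ℕ, Ioo (t - n • u) (t + n • u) ↔ ∃ n : ℕ, |s - t| < n • u := by
  simp only [mem_iUnion, mem_Ioo, abs_sub_lt_iff, sub_lt_comm, sub_lt_iff_lt_add', and_comm]

theorem iUnion_Ioo_nsmul_subset_of_mem (hs : s ∈ ⋃ n : ℕ, Ioo (t - n • u) (t + n • u)) :
    ⋃ n : ℕ, Ioo (s - n • u) (s + n • u) ⊆ ⋃ n : ℕ, Ioo (t - n • u) (t + n • u) := by
  obtain ⟨n, hn⟩ := mem_iUnion_Ioo_nsmul_iff.1 hs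
  intro x hx
  obtain ⟨m, hm⟩ := mem_iUnion_Ioo_nsmul_iff.1 hx
  refine mem_iUnion_Ioo_nsmul_iff.2 ⟨m + n, ?_⟩
  calc |x - t| ≤ |x - s| + |s - t| := abs_sub_le x s t
    _ < m • u + n • u := add_lt_add hm hn
    _ = (m + n) • u := (add_nsmul u m n).symm

theorem iUnion_Ioo_nsmul_eq_of_mem (hs : s ∈ ⋃ n : ℕ, Ioo (t - n • u) (t + n • u)) :
    ⋃ n : ℕ, Ioo (s - n • u) (s + n • u) = ⋃ n : ℕ, Ioo (t - n • u) (t + n • u) := by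
  have ht : t ∈ ⋃ n : ℕ, Ioo (s - n • u) (s + n • u) := by
    obtain ⟨n, hn⟩ := mem_iUnion_Ioo_nsmul_iff.1 hs
    exact mem_iUnion_Ioo_nsmul_iff.2 ⟨n, abs_sub_comm s t ▸ hn⟩
  exact (iUnion_Ioo_nsmul_subset_of_mem hs).antisymm (iUnion_Ioo_nsmul_subset_of_mem ht)

end WalkableWorld

theorem walkable_world_eq_of_mem_general (𝓤 : Ultrafilter ℕ)
    (t u s : Filter.Germ (𝓤 : Filter ℕ) ℝ)
    (hs : s ∈ WW 𝓤 t u) :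
    WW 𝓤 s u = WW 𝓤 t u :=
  iUnion_Ioo_nsmul_eq_of_mem hs

/-- In the ultrapower field of a free ultrafilter 𝓤 on ℕ, if
s ∈ WW(t,u) (with u > 0) then WW(s,u) = WW(t,u): walkable worlds with a common
step length and a common point coincide. -/
theorem walkable_world_eq_of_mem (𝓤 : Ultrafilter ℕ)
    (hfree : (𝓤 : Filter ℕ) ≤ Filter.cofinite)
    (t u s : Filter.Germ (𝓤 : Filter ℕ) ℝ) (hu : 0 < u)
    (hs : s ∈ WW 𝓤 t u) :
    WW 𝓤 s u = WW 𝓤 t u :=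
  walkable_world_eq_of_mem_general 𝓤 t u s hs
end

section
/- Let 𝓤 be an ultrafilter on ℕ containing the cofinite filter, let 𝔽 = Filter.Germ ↑𝓤 ℝ, and let t, u ∈ 𝔽 with u > 0. Then the map s ↦ (s − t)/u is a strictly increasing bijection from WW(t,u) onto WW(0,1); hence any two walkable worlds are order isomorphic. -/
section AffineRescaling

variable {K : Type*} [Field K] [LinearOrder K] [IsStrictOrderedRing K]

def OrderIso.subDiv (t u : K) (hu : 0 < u) : K ≃o K :=
  (OrderIso.subRight t).trans (OrderIso.divRight₀ u hu)

@[simp]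
lemma OrderIso.subDiv_apply (t u : K) (hu : 0 < u) (s : K) :
    OrderIso.subDiv t u hu s = (s - t) / u :=
  rfl

lemma Set.image_sub_div_Ioo_nsmul (t u : K) (hu : 0 < u) (n : ℕ) :
    (fun s => (s - t) / u) '' Set.Ioo (t - n • u) (t + n • u) =
      Set.Ioo (0 - n • (1 : K)) (0 + n • 1) := by
  rw [show (fun s => (s - t) / u) = OrderIso.subDiv t u hu from rfl, OrderIso.image_Ioo]
  simp [nsmul_eq_mul, neg_div, mul_div_cancel_right₀ _ hu.ne']

end AffineRescaling

lemma image_sub_div_WW (𝓤 : Ultrafilter ℕ) (t u : Filter.Germ (𝓤 : Filter ℕ) ℝ) (hu : 0 < u) :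
    (fun s => (s - t) / u) '' WW 𝓤 t u = WW 𝓤 0 1 := by
  simp only [WW, Set.image_iUnion, Set.image_sub_div_Ioo_nsmul t u hu]

theorem walkable_worlds_order_isomorphic_general (𝓤 : Ultrafilter ℕ)
    (t u : Filter.Germ (𝓤 : Filter ℕ) ℝ) (hu : 0 < u) :
    Set.BijOn (fun s : Filter.Germ (𝓤 : Filter ℕ) ℝ => (s - t) / u)
        (WW 𝓤 t u) (WW 𝓤 0 1) ∧
    StrictMonoOn (fun s : Filter.Germ (𝓤 : Filter ℕ) ℝ => (s - t) / u)
        (WW 𝓤 t u) := by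
  have hmono := (OrderIso.subDiv t u hu).strictMono
  refine ⟨?_, hmono.strictMonoOn _⟩
  rw [← image_sub_div_WW 𝓤 t u hu]
  exact hmono.injective.injOn.bijOn_image

/-- In the ultrapower field of a free ultrafilter 𝓤 on ℕ, for
t, u with u > 0, the map s ↦ (s − t)/u is a strictly increasing bijection from
WW(t,u) onto WW(0,1); hence any two walkable worlds are order isomorphic. -/
theorem walkable_worlds_order_isomorphic (𝓤 : Ultrafilter ℕ)
    (hfree : (𝓤 : Filter ℕ) ≤ Filter.cofinite)
    (t u : Filter.Germ (𝓤 : Filter ℕ) ℝ) (hu : 0 < u) :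
    Set.BijOn (fun s : Filter.Germ (𝓤 : Filter ℕ) ℝ => (s - t) / u)
        (WW 𝓤 t u) (WW 𝓤 0 1) ∧
    StrictMonoOn (fun s : Filter.Germ (𝓤 : Filter ℕ) ℝ => (s - t) / u)
        (WW 𝓤 t u) :=
  walkable_worlds_order_isomorphic_general 𝓤 t u hu
end

section
/- Let 𝓤 be an ultrafilter on ℕ containing the cofinite filter, and let 𝔽 = Filter.Germ ↑𝓤 ℝ. Then for all t, u ∈ 𝔽 with u > 0, the walkable world WW(t,u) is a proper subset of 𝔽: WW(t,u) ≠ 𝔽, i.e. there is an element of 𝔽 that cannot be reached from t by finitely many steps of any fixed length u. -/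
open Filter Set

theorem exists_forall_add_nsmul_lt_of_not_archimedean {K : Type*} [Field K] [LinearOrder K]
    [IsStrictOrderedRing K] (hK : ¬ Archimedean K) (t : K) {u : K} (hu : 0 < u) :
    ∃ x : K, ∀ n : ℕ, t + n • u < x := by
  obtain ⟨ω, hω⟩ : ∃ ω : K, ∀ n : ℕ, (n : K) < ω := by
    simpa [archimedean_iff_nat_le] using hK
  refine ⟨t + u * ω, fun n => ?_⟩
  rw [nsmul_eq_mul, mul_comm]
  gcongr
  exact hω n

namespace Filter.Germ

theorem natCast_lt_coe_natCast {𝓤 : Ultrafilter ℕ} (hfree : (𝓤 : Filter ℕ) ≤ cofinite) (n : ℕ) :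
    (n : Germ (𝓤 : Filter ℕ) ℝ) < ↑(fun k : ℕ => (k : ℝ)) := by
  rw [← natCast_def, coe_lt]
  refine hfree ?_
  rw [Nat.cofinite_eq_atTop]
  exact (eventually_gt_atTop n).mono fun k hk => by exact_mod_cast hk

theorem not_archimedean_real {𝓤 : Ultrafilter ℕ} (hfree : (𝓤 : Filter ℕ) ≤ cofinite) :
    ¬ Archimedean (Germ (𝓤 : Filter ℕ) ℝ) := by
  rw [archimedean_iff_nat_lt, not_forall]
  exact ⟨_, fun ⟨n, hn⟩ => (natCast_lt_coe_natCast hfree n).asymm hn⟩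

end Filter.Germ

/-- In the ultrapower field 𝔽 of a free ultrafilter 𝓤 on ℕ, every
walkable world WW(t,u) (u > 0) is a proper subset of 𝔽: some element of 𝔽 cannot
be reached from t by finitely many steps of the fixed length u. -/
theorem walkable_world_ne_univ (𝓤 : Ultrafilter ℕ)
    (hfree : (𝓤 : Filter ℕ) ≤ Filter.cofinite) :
    ∀ t u : Filter.Germ (𝓤 : Filter ℕ) ℝ, 0 < u →
      WW 𝓤 t u ≠ Set.univ := by
  intro t u hu hWW
  obtain ⟨x, hx⟩ :=
    exists_forall_add_nsmul_lt_of_not_archimedean (Germ.not_archimedean_real hfree) t hu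
  obtain ⟨n, hn⟩ := mem_iUnion.1 (hWW ▸ mem_univ x : x ∈ WW 𝓤 t u)
  exact (hx n).not_gt hn.2
end

section
/- Let 𝓤 be an ultrafilter on ℕ containing the cofinite filter, and let 𝔽 = Filter.Germ ↑𝓤 ℝ. Then the monad of 0 is not a walkable world: for all t, u ∈ 𝔽 with u > 0, WW(t,u) ≠ monad(0). -/
/-- The monad of 0: the set of infinitesimal elements of the ultrapower field
𝔽 = Filter.Germ ↑𝓤 ℝ, i.e. those ξ with -r ≤ ξ ≤ r for every real r > 0
(reals viewed in 𝔽 as germs of constant functions). -/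
def monad (𝓤 : Ultrafilter ℕ) : Set (Filter.Germ (𝓤 : Filter ℕ) ℝ) :=
  {ξ | ∀ r : ℝ, 0 < r →
    -(Filter.Germ.const r : Filter.Germ (𝓤 : Filter ℕ) ℝ) ≤ ξ ∧
    ξ ≤ (Filter.Germ.const r : Filter.Germ (𝓤 : Filter ℕ) ℝ)}

open Filter

/-!
If `WW(t,u) = monad(0)`, then `t` and `t + u` lie in the monad, hence so does `u`. Representing
`u` by a sequence `b`, the germ `ξ` of `k ↦ √|b k|` is again infinitesimal, yet `n • u ≤ ξ` for
every `n`, because `n • |b k| ≤ √|b k|` as soon as `|b k| ≤ 1 / n²`. So `t + ξ` is infinitesimal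
but escapes every interval `(t - n • u, t + n • u)`.
-/

variable {𝓤 : Ultrafilter ℕ}

lemma coe_mem_monad_iff {f : ℕ → ℝ} :
    (f : Germ (𝓤 : Filter ℕ) ℝ) ∈ monad 𝓤 ↔
      ∀ r : ℝ, 0 < r → ∀ᶠ k in (𝓤 : Filter ℕ), |f k| ≤ r := by
  refine forall₂_congr fun r _ => ?_
  simp only [abs_le, eventually_and]
  exact Iff.rfl

lemma add_mem_monad {x y : Germ (𝓤 : Filter ℕ) ℝ} (hx : x ∈ monad 𝓤) (hy : y ∈ monad 𝓤) :
    x + y ∈ monad 𝓤 := by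
  induction x using Germ.inductionOn with | h f =>
  induction y using Germ.inductionOn with | h g =>
  rw [coe_mem_monad_iff] at hx hy
  rw [← Germ.coe_add, coe_mem_monad_iff]
  intro r hr
  filter_upwards [hx (r / 2) (half_pos hr), hy (r / 2) (half_pos hr)] with k hfk hgk
  calc |f k + g k| ≤ |f k| + |g k| := abs_add_le _ _
    _ ≤ r := by linarith

lemma neg_mem_monad {x : Germ (𝓤 : Filter ℕ) ℝ} (hx : x ∈ monad 𝓤) : -x ∈ monad 𝓤 := by
  induction x using Germ.inductionOn with | h f =>
  rw [coe_mem_monad_iff] at hx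
  simpa only [← Germ.coe_neg, coe_mem_monad_iff, Pi.neg_apply, abs_neg] using hx

lemma mul_le_sqrt_abs {c x : ℝ} (hc : 0 ≤ c) (hcx : c ^ 2 * |x| ≤ 1) : c * x ≤ √|x| := by
  have hroot : c * √|x| ≤ 1 := by
    rw [← Real.sqrt_sq hc, ← Real.sqrt_mul (sq_nonneg c)]
    exact Real.sqrt_le_one.2 hcx
  calc c * x ≤ c * |x| := mul_le_mul_of_nonneg_left (le_abs_self x) hc
    _ = √|x| * (c * √|x|) := by rw [mul_left_comm, Real.mul_self_sqrt (abs_nonneg x)]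
    _ ≤ √|x| := mul_le_of_le_one_right (Real.sqrt_nonneg _) hroot

lemma exists_mem_monad_forall_nsmul_le {u : Germ (𝓤 : Filter ℕ) ℝ} (hu : u ∈ monad 𝓤) :
    ∃ ξ ∈ monad 𝓤, ∀ n : ℕ, n • u ≤ ξ := by
  induction u using Germ.inductionOn with | h b =>
  rw [coe_mem_monad_iff] at hu
  refine ⟨↑(fun k => √|b k|), coe_mem_monad_iff.2 fun r hr => ?_, fun n => ?_⟩
  · filter_upwards [hu (r ^ 2) (by positivity)] with k hk
    rw [abs_of_nonneg (Real.sqrt_nonneg _)]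
    exact (Real.sqrt_le_left hr.le).2 hk
  · rw [← Germ.coe_smul, Germ.coe_le]
    filter_upwards [hu (1 / ((n : ℝ) + 1) ^ 2) (by positivity)] with k hk
    rw [le_div_iff₀ (by positivity)] at hk
    simp only [Pi.smul_apply, nsmul_eq_mul]
    have h2n : (0 : ℝ) ≤ 2 * n + 1 := by positivity
    exact mul_le_sqrt_abs n.cast_nonneg (by nlinarith [mul_nonneg h2n (abs_nonneg (b k))])

lemma self_mem_WW {t u : Germ (𝓤 : Filter ℕ) ℝ} (hu : 0 < u) : t ∈ WW 𝓤 t u :=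
  Set.mem_iUnion.2 ⟨1, by simpa using hu⟩

lemma add_mem_WW {t u : Germ (𝓤 : Filter ℕ) ℝ} (hu : 0 < u) : t + u ∈ WW 𝓤 t u :=
  Set.mem_iUnion.2 ⟨2, by simp only [two_nsmul]; constructor <;> linarith⟩

lemma add_notMem_WW {t u ξ : Germ (𝓤 : Filter ℕ) ℝ} (hξ : ∀ n : ℕ, n • u ≤ ξ) :
    t + ξ ∉ WW 𝓤 t u := by
  simp only [WW, Set.mem_iUnion, Set.mem_Ioo, not_exists, not_and, not_lt]
  exact fun n _ => add_le_add_right (hξ n) t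

theorem monad_not_walkable_world_general (𝓤 : Ultrafilter ℕ) :
    ∀ t u : Filter.Germ (𝓤 : Filter ℕ) ℝ, 0 < u →
      WW 𝓤 t u ≠ monad 𝓤 := by
  intro t u hu h
  have ht : t ∈ monad 𝓤 := h ▸ self_mem_WW hu
  have htu : t + u ∈ monad 𝓤 := h ▸ add_mem_WW hu
  have hu_mem : u ∈ monad 𝓤 := by simpa using add_mem_monad htu (neg_mem_monad ht)
  obtain ⟨ξ, hξ, hle⟩ := exists_mem_monad_forall_nsmul_le hu_mem
  exact add_notMem_WW hle (h ▸ add_mem_monad ht hξ)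

/-- In the ultrapower field of a free ultrafilter 𝓤 on ℕ, the monad
of 0 is not a walkable world: WW(t,u) ≠ monad(0) for all t and all u > 0. -/
theorem monad_not_walkable_world (𝓤 : Ultrafilter ℕ)
    (hfree : (𝓤 : Filter ℕ) ≤ Filter.cofinite) :
    ∀ t u : Filter.Germ (𝓤 : Filter ℕ) ℝ, 0 < u →
      WW 𝓤 t u ≠ monad 𝓤 :=
  monad_not_walkable_world_general 𝓤
end

section
/- Let 𝓤 be an ultrafilter on ℕ containing the cofinite filter, let 𝔽 = Filter.Germ ↑𝓤 ℝ, and let t, u, s, v ∈ 𝔽 with u, v > 0. If WW(t,u) ∩ WW(s,v) ≠ ∅, then WW(t,u) ⊆ WW(s,v) or WW(s,v) ⊆ WW(t,u): two walkable worlds are either disjoint or nested (in particular, if they intersect and are unequal, one is strictly contained in the other). -/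
/-!
If `w` lies in both worlds and `x ∈ WW(t,u)`, walking `x → t → w → s` gives
`|x - s| < (m + a)•u + b•v` for suitable `m a b : ℕ`. So `WW(t,u) ⊆ WW(s,v)` as soon as `u` is
bounded by some multiple `n•v`; otherwise `v < u` and the reverse inclusion holds. Only the
ordered additive group structure of the field enters.
-/

section WalkableWorld

variable {G : Type*} [AddCommGroup G] [LinearOrder G] [IsOrderedAddMonoid G]

def walkableWorld (t u : G) : Set G :=
  ⋃ n : ℕ, Set.Ioo (t - n • u) (t + n • u)

theorem mem_walkableWorld {t u x : G} : x ∈ walkableWorld t u ↔ ∃ n : ℕ, |x - t| < n • u := by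
  simp only [walkableWorld, Set.mem_iUnion, Set.mem_Ioo, abs_sub_lt_iff, sub_lt_comm (a := t),
    sub_lt_iff_lt_add', and_comm]

theorem walkableWorld_subset_of_le_nsmul {t u s v : G} {n : ℕ} (hn : u ≤ n • v)
    (hmeet : (walkableWorld t u ∩ walkableWorld s v).Nonempty) :
    walkableWorld t u ⊆ walkableWorld s v := by
  obtain ⟨w, hwt, hws⟩ := hmeet
  obtain ⟨a, ha⟩ := mem_walkableWorld.1 hwt
  obtain ⟨b, hb⟩ := mem_walkableWorld.1 hws
  intro x hx
  obtain ⟨m, hm⟩ := mem_walkableWorld.1 hx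
  refine mem_walkableWorld.2 ⟨(m + a) * n + b, ?_⟩
  calc |x - s| ≤ |x - t| + |w - t| + |w - s| := by
        rw [abs_sub_comm w t]
        exact (abs_sub_le x w s).trans (add_le_add_left (abs_sub_le x t w) _)
    _ < m • u + a • u + b • v := by gcongr
    _ ≤ (m + a) • (n • v) + b • v := by rw [add_nsmul]; gcongr
    _ = ((m + a) * n + b) • v := by rw [← mul_nsmul', ← add_nsmul]

theorem walkableWorld_subset_or_subset {t u s v : G}
    (hmeet : (walkableWorld t u ∩ walkableWorld s v).Nonempty) :
    walkableWorld t u ⊆ walkableWorld s v ∨ walkableWorld s v ⊆ walkableWorld t u := by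
  by_cases h : ∃ n : ℕ, u ≤ n • v
  · obtain ⟨n, hn⟩ := h
    exact Or.inl (walkableWorld_subset_of_le_nsmul hn hmeet)
  · push Not at h
    have hvu : v ≤ 1 • u := by simpa using (h 1).le
    exact Or.inr (walkableWorld_subset_of_le_nsmul hvu (Set.inter_comm _ _ ▸ hmeet))

end WalkableWorld

theorem WW_eq_walkableWorld (𝓤 : Ultrafilter ℕ) (t u : Filter.Germ (𝓤 : Filter ℕ) ℝ) :
    WW 𝓤 t u = walkableWorld t u :=
  rfl

theorem walkable_worlds_nested_of_inter_general (𝓤 : Ultrafilter ℕ)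
    (t u s v : Filter.Germ (𝓤 : Filter ℕ) ℝ)
    (hmeet : WW 𝓤 t u ∩ WW 𝓤 s v ≠ ∅) :
    WW 𝓤 t u ⊆ WW 𝓤 s v ∨ WW 𝓤 s v ⊆ WW 𝓤 t u := by
  simp only [WW_eq_walkableWorld] at hmeet ⊢
  exact walkableWorld_subset_or_subset (Set.nonempty_iff_ne_empty.2 hmeet)

/-- In the ultrapower field of a free ultrafilter 𝓤 on ℕ, two
walkable worlds WW(t,u) and WW(s,v) (u, v > 0) that intersect are nested: one is
contained in the other. Hence walkable worlds are either disjoint or nested. -/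
theorem walkable_worlds_nested_of_inter (𝓤 : Ultrafilter ℕ)
    (hfree : (𝓤 : Filter ℕ) ≤ Filter.cofinite)
    (t u s v : Filter.Germ (𝓤 : Filter ℕ) ℝ) (hu : 0 < u) (hv : 0 < v)
    (hmeet : WW 𝓤 t u ∩ WW 𝓤 s v ≠ ∅) :
    WW 𝓤 t u ⊆ WW 𝓤 s v ∨ WW 𝓤 s v ⊆ WW 𝓤 t u :=
  walkable_worlds_nested_of_inter_general 𝓤 t u s v hmeet
end
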